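/- Assume K > 0 and l := 2(q+δ)/(2+δ) = 2_*(η), so that α_l = n-2-κ(η). Let v be a C² solution of u'' + ((n-1)/r)u' + (η/r²)u + K r^{δ} u|u|^{q-2} = 0 on an interval (0,r₀), positive for all sufficiently small r, such that lim_{r→0} v(r) r^{α_l} = 0 and lim_{r→0} v'(r) r^{α_l+1} = 0, and such that v(r) r^{κ(η)} does NOT converge to a finite limit as r → 0. Then there exist constants 0 < C₁ ≤ C₂ and r₁ ∈ (0, min(r₀,1)) such that C₁ ≤ v(r) r^{n-2-κ(η)} |ln r|^{1/(q-2)} ≤ C₂ for all 0 < r < r₁. -/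

import Mathlib

/-!
In the Emden–Fowler variables `t = log r`, `X = r ^ α v`, the equation becomes the autonomous
equation `X'' = s X' - K X ^ (q - 1)` with `s = √((n-2)² - 4η) > 0`; the hypotheses say that
`X → 0` as `t → -∞` while `X e^{-st}` has no limit. For the logarithmic derivative `u = X'/X` and
`ρ = X ^ (q - 2)` this is the system `u' = s u - u² - K ρ`, `ρ' = (q - 2) ρ u`.

Backward in time, barrier arguments leave three possibilities. If `u` stays between `K ρ/(2s)`
and `2 K ρ/s`, then `(1/ρ)' = -(q - 2) u/ρ` lies between two negative constants, so
`ρ ≍ 1/|t|`, which is the claim. If `u ≤ K ρ/(2s)`, then `u ≤ 0` and `X` cannot tend to `0`.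
If `u ≥ 2 K ρ/s`, then `K ρ ≤ s u/2`, and either `u` drops below `s/2` (then `u` decays
exponentially and `X` stays away from `0`), or exceeds `2s` (then `X e^{-st} → 0`), or stays in
`[s/2, 2s]`, where `u - s` is exponentially small, so that `log X - s t` converges.
-/

open Real Filter Topology Set

noncomputable section

/-- κ(η) = ((n-2) - √((n-2)²-4η))/2. -/
def kappa (n : ℕ) (η : ℝ) : ℝ :=
  (((n:ℝ) - 2) - Real.sqrt (((n:ℝ) - 2) ^ 2 - 4 * η)) / 2

/-- The Serrin-type exponent 2_*(η). -/
def serrinStar (n : ℕ) (η : ℝ) : ℝ :=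
  2 * ((n:ℝ) + Real.sqrt (((n:ℝ) - 2) ^ 2 - 4 * η)) /
    ((n:ℝ) - 2 + Real.sqrt (((n:ℝ) - 2) ^ 2 - 4 * η))

section HalfLine

variable {f f' : ℝ → ℝ} {b : ℝ}

theorem monotoneOn_Iic_of_hasDerivAt_nonneg (hf : ∀ t ≤ b, HasDerivAt f (f' t) t)
    (hf' : ∀ t ≤ b, 0 ≤ f' t) : MonotoneOn f (Iic b) :=
  monotoneOn_of_hasDerivWithinAt_nonneg (convex_Iic b)
    (fun t ht => (hf t ht).continuousAt.continuousWithinAt)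
    (fun t ht => (hf t (mem_Iic.1 (interior_subset ht))).hasDerivWithinAt)
    (fun t ht => hf' t (mem_Iic.1 (interior_subset ht)))

theorem antitoneOn_Iic_of_hasDerivAt_nonpos (hf : ∀ t ≤ b, HasDerivAt f (f' t) t)
    (hf' : ∀ t ≤ b, f' t ≤ 0) : AntitoneOn f (Iic b) :=
  antitoneOn_of_hasDerivWithinAt_nonpos (convex_Iic b)
    (fun t ht => (hf t ht).continuousAt.continuousWithinAt)
    (fun t ht => (hf t (mem_Iic.1 (interior_subset ht))).hasDerivWithinAt)
    (fun t ht => hf' t (mem_Iic.1 (interior_subset ht)))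

theorem pos_of_hasDerivAt_neg_of_eq_zero (hf : ∀ t ≤ b, HasDerivAt f (f' t) t)
    (hzero : ∀ t ≤ b, f t = 0 → f' t < 0) (hb : 0 < f b) : ∀ t ≤ b, 0 < f t := by
  intro t ht
  by_contra! hft
  have := image_le_of_deriv_right_lt_deriv_boundary' (B := 0) (B' := 0)
    (fun x hx => (hf x hx.2).continuousAt.continuousWithinAt)
    (fun x hx => (hf x hx.2.le).hasDerivWithinAt) hft continuousOn_const
    (fun x _ => hasDerivWithinAt_const x _ 0) (fun x hx => hzero x hx.2.le) ⟨ht, le_rfl⟩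
  exact (this.trans_lt hb).false

theorem le_mul_exp_of_mul_le_deriv {β : ℝ} (hf : ∀ t ≤ b, HasDerivAt f (f' t) t)
    (hβ : ∀ t ≤ b, β * f t ≤ f' t) : ∀ t ≤ b, f t ≤ f b * exp (β * (t - b)) := by
  have hmono : MonotoneOn (fun t => f t * exp (-β * t)) (Iic b) := by
    refine monotoneOn_Iic_of_hasDerivAt_nonneg
      (fun t ht => (hf t ht).mul ((hasDerivAt_id' t).const_mul (-β)).exp) fun t ht => ?_
    have := mul_le_mul_of_nonneg_right (sub_nonneg.2 (hβ t ht)) (exp_pos (-β * t)).le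
    linarith
  intro t ht
  calc f t = f t * exp (-β * t) * exp (β * t) := by rw [mul_assoc, ← exp_add]; simp
    _ ≤ f b * exp (-β * b) * exp (β * t) :=
      mul_le_mul_of_nonneg_right (hmono ht self_mem_Iic ht) (exp_pos _).le
    _ = f b * exp (β * (t - b)) := by rw [mul_assoc, ← exp_add]; ring_nf

theorem exists_tendsto_atBot_of_abs_deriv_le {A γ : ℝ} (hγ : 0 < γ)
    (hf : ∀ t ≤ b, HasDerivAt f (f' t) t) (hf' : ∀ t ≤ b, |f' t| ≤ A * exp (γ * t)) :
    ∃ c, Tendsto f atBot (𝓝 c) := by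
  set E : ℝ → ℝ := fun t => A / γ * exp (γ * t)
  have hE : ∀ t, HasDerivAt E (A * exp (γ * t)) t := fun t =>
    ((((hasDerivAt_id' t).const_mul γ).exp).const_mul (A / γ)).congr_deriv (by field_simp)
  have hup : MonotoneOn (fun t => f t + E t) (Iic b) :=
    monotoneOn_Iic_of_hasDerivAt_nonneg (fun t ht => (hf t ht).add (hE t))
      fun t ht => by linarith [neg_abs_le (f' t), hf' t ht]
  have hdown : AntitoneOn (fun t => f t - E t) (Iic b) :=
    antitoneOn_Iic_of_hasDerivAt_nonpos (fun t ht => (hf t ht).sub (hE t))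
      fun t ht => by linarith [le_abs_self (f' t), hf' t ht]
  have hA : 0 ≤ A := nonneg_of_mul_nonneg_left ((abs_nonneg _).trans (hf' b le_rfl)) (exp_pos _)
  set F : ℝ → ℝ := fun t => f (min t b) + E (min t b)
  have hF : Monotone F := fun t t' h =>
    hup (min_le_right t b) (min_le_right t' b) (min_le_min_right b h)
  have hFbdd : BddBelow (range F) := ⟨f b - E b, by
    rintro _ ⟨t, rfl⟩
    have := hdown (min_le_right t b) self_mem_Iic (min_le_right t b)
    have : 0 ≤ E (min t b) := by positivity
    simp only [F]; linarith⟩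
  have hEmin : Tendsto (fun t => E (min t b)) atBot (𝓝 0) := by
    have hmin : Tendsto (fun t => min t b) atBot atBot :=
      tendsto_atBot_mono (fun t => min_le_left t b) tendsto_id
    simpa [E] using ((tendsto_exp_atBot.comp (hmin.const_mul_atBot hγ)).const_mul (A / γ))
  refine ⟨⨅ t, F t, ?_⟩
  have := (tendsto_atBot_ciInf hF hFbdd).sub hEmin
  rw [sub_zero] at this
  refine this.congr' ?_
  filter_upwards [eventually_le_atBot b] with t ht
  simp [F, min_eq_left ht]

theorem exists_linear_bounds_atBot {A B : ℝ} (hA : 0 < A) (hf : ∀ t ≤ b, HasDerivAt f (f' t) t)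
    (hf' : ∀ t ≤ b, -B ≤ f' t ∧ f' t ≤ -A) :
    ∃ M₁ M₂, 0 < M₁ ∧ M₁ ≤ M₂ ∧ ∀ᶠ t in atBot, M₁ * -t ≤ f t ∧ f t ≤ M₂ * -t := by
  have hlow : AntitoneOn (fun t => f t + A * t) (Iic b) :=
    antitoneOn_Iic_of_hasDerivAt_nonpos (fun t ht => (hf t ht).add ((hasDerivAt_id' t).const_mul A))
      fun t ht => by linarith [(hf' t ht).2]
  have hupp : MonotoneOn (fun t => f t + B * t) (Iic b) :=
    monotoneOn_Iic_of_hasDerivAt_nonneg (fun t ht => (hf t ht).add ((hasDerivAt_id' t).const_mul B))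
      fun t ht => by linarith [(hf' t ht).1]
  have hAB : A ≤ B := by linarith [hf' b le_rfl]
  refine ⟨A / 2, B + |f b + B * b|, by positivity, by linarith [abs_nonneg (f b + B * b)], ?_⟩
  filter_upwards [eventually_le_atBot b, eventually_le_atBot (-1),
    eventually_le_atBot (2 * (f b + A * b) / A)] with t htb ht1 htA
  have h1 : f b + A * b ≤ f t + A * t := hlow htb self_mem_Iic htb
  have h2 : f t + B * t ≤ f b + B * b := hupp htb self_mem_Iic htb
  have h3 : A * t ≤ 2 * (f b + A * b) := by rwa [le_div_iff₀ hA, mul_comm] at htA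
  have h4 : |f b + B * b| * 1 ≤ |f b + B * b| * -t := by gcongr; linarith
  constructor <;> nlinarith [le_abs_self (f b + B * b)]

/-- Backward in time, `w' = -a w + e` with `a ≥ σ > 0` amplifies exponentially any value of `w`
that is large compared with the forcing `e`, which a solution bounded below cannot afford. -/
theorem neg_mul_exp_le_of_hasDerivAt {w a e : ℝ → ℝ} {σ γ A M : ℝ} (hσ : 0 < σ) (hγ : 0 ≤ γ)
    (hA : 0 < A) (hw : ∀ t ≤ b, HasDerivAt w (-(a t * w t) + e t) t) (ha : ∀ t ≤ b, σ ≤ a t)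
    (he : ∀ t ≤ b, |e t| ≤ σ / 2 * A * exp (γ * t)) (hM : ∀ t ≤ b, M ≤ w t) :
    ∀ t ≤ b, -(A * exp (γ * t)) ≤ w t := by
  intro τ hτ
  by_contra! hτw
  have hbelow : ∀ t ≤ τ, 0 < -(A * exp (γ * t)) - w t := by
    refine pos_of_hasDerivAt_neg_of_eq_zero (fun t ht =>
      (((((hasDerivAt_id' t).const_mul γ).exp).const_mul A).neg.sub (hw t (ht.trans hτ))))
      (fun t ht hzero => ?_) (by linarith)
    nlinarith [ha t (ht.trans hτ), neg_abs_le (e t), he t (ht.trans hτ),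
      mul_pos hA (exp_pos (γ * t))]
  have hgrow : ∀ t ≤ τ, w t ≤ w τ * exp (-(σ / 2) * (t - τ)) := by
    refine le_mul_exp_of_mul_le_deriv (fun t ht => hw t (ht.trans hτ)) fun t ht => ?_
    nlinarith [hbelow t ht, ha t (ht.trans hτ), neg_abs_le (e t), he t (ht.trans hτ),
      mul_pos hA (exp_pos (γ * t))]
  have hwτ : w τ < 0 := by linarith [mul_pos hA (exp_pos (γ * τ))]
  have hlim : Tendsto (fun t => w τ * exp (-(σ / 2) * (t - τ))) atBot atBot :=
    (tendsto_exp_atTop.comp ((tendsto_atBot_add_const_right _ (-τ) tendsto_id)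
      |>.const_mul_atBot_of_neg (by linarith))).const_mul_atTop_of_neg hwτ
  obtain ⟨t, htM, htτ⟩ := ((hlim.eventually_lt_atBot M).and (eventually_le_atBot τ)).exists
  linarith [hgrow t htτ, hM t (htτ.trans hτ)]

theorem abs_le_mul_exp_of_hasDerivAt {w a e : ℝ → ℝ} {σ γ A M : ℝ} (hσ : 0 < σ) (hγ : 0 ≤ γ)
    (hA : 0 < A) (hw : ∀ t ≤ b, HasDerivAt w (-(a t * w t) + e t) t) (ha : ∀ t ≤ b, σ ≤ a t)
    (he : ∀ t ≤ b, |e t| ≤ σ / 2 * A * exp (γ * t)) (hM : ∀ t ≤ b, |w t| ≤ M) :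
    ∀ t ≤ b, |w t| ≤ A * exp (γ * t) := by
  intro t ht
  have hlow := neg_mul_exp_le_of_hasDerivAt hσ hγ hA hw ha he
    (fun t ht => (neg_le_of_abs_le (hM t ht))) t ht
  have hupp := neg_mul_exp_le_of_hasDerivAt (w := fun t => -w t) (e := fun t => -e t) hσ hγ hA
    (fun t ht => (hw t ht).neg.congr_deriv (by ring)) ha (fun t ht => by simpa using he t ht)
    (fun t ht => neg_le_neg (le_abs_self (w t) |>.trans (hM t ht))) t ht
  exact abs_le.2 ⟨hlow, by linarith⟩

end HalfLine

/-- The equation `X'' = s X' - K X ^ (p + 1)` for `u = X'/X` and `ρ = X ^ p`. -/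
structure RiccatiSystem (s K p : ℝ) (u ρ X : ℝ → ℝ) (b : ℝ) : Prop where
  hasDerivAt_u : ∀ t ≤ b, HasDerivAt u (s * u t - u t ^ 2 - K * ρ t) t
  hasDerivAt_rho : ∀ t ≤ b, HasDerivAt ρ (p * ρ t * u t) t
  hasDerivAt_X : ∀ t ≤ b, HasDerivAt X (u t * X t) t
  X_pos : ∀ t ≤ b, 0 < X t
  rho_eq : ∀ t ≤ b, ρ t = X t ^ p

namespace RiccatiSystem

variable {s K p : ℝ} {u ρ X : ℝ → ℝ} {b : ℝ}

theorem mono (h : RiccatiSystem s K p u ρ X b) {b' : ℝ} (hb' : b' ≤ b) :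
    RiccatiSystem s K p u ρ X b' where
  hasDerivAt_u t ht := h.hasDerivAt_u t (ht.trans hb')
  hasDerivAt_rho t ht := h.hasDerivAt_rho t (ht.trans hb')
  hasDerivAt_X t ht := h.hasDerivAt_X t (ht.trans hb')
  X_pos t ht := h.X_pos t (ht.trans hb')
  rho_eq t ht := h.rho_eq t (ht.trans hb')

theorem rho_pos (h : RiccatiSystem s K p u ρ X b) : ∀ t ≤ b, 0 < ρ t := fun t ht =>
  h.rho_eq t ht ▸ rpow_pos_of_pos (h.X_pos t ht) p

theorem hasDerivAt_log_X (h : RiccatiSystem s K p u ρ X b) :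
    ∀ t ≤ b, HasDerivAt (fun t => log (X t)) (u t) t := fun t ht =>
  ((h.hasDerivAt_X t ht).log (h.X_pos t ht).ne').congr_deriv (by field_simp [(h.X_pos t ht).ne'])

theorem lt_mul_rho_backward (h : RiccatiSystem s K p u ρ X b) (hs : 0 < s)
    (hsmall : ∀ t ≤ b, (2 * K / s) ^ 2 * (p + 1) * ρ t < K) (hb : u b < 2 * K / s * ρ b) :
    ∀ t ≤ b, u t < 2 * K / s * ρ t := by
  set c := 2 * K / s
  have hcross : ∀ t ≤ b, c * ρ t - u t = 0 →
      c * (p * ρ t * u t) - (s * u t - u t ^ 2 - K * ρ t) < 0 := by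
    intro t ht hzero
    have hsc : s * (c * ρ t) = 2 * K * ρ t := by simp only [c]; field_simp
    rw [show u t = c * ρ t by linarith]
    linarith [mul_pos (h.rho_pos t ht) (sub_pos.2 (hsmall t ht))]
  exact fun t ht => sub_pos.1 (pos_of_hasDerivAt_neg_of_eq_zero
    (fun t ht => ((h.hasDerivAt_rho t ht).const_mul c).sub (h.hasDerivAt_u t ht)) hcross
    (sub_pos.2 hb) t ht)

theorem mul_rho_lt_backward (h : RiccatiSystem s K p u ρ X b) (hs : 0 < s) (hK : 0 < K)
    (hp : 0 ≤ p) (hb : K / (2 * s) * ρ b < u b) : ∀ t ≤ b, K / (2 * s) * ρ t < u t := by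
  set c := K / (2 * s)
  have hcross : ∀ t ≤ b, u t - c * ρ t = 0 →
      s * u t - u t ^ 2 - K * ρ t - c * (p * ρ t * u t) < 0 := by
    intro t ht hzero
    have hsc : s * (c * ρ t) = K / 2 * ρ t := by simp only [c]; field_simp
    rw [show u t = c * ρ t by linarith]
    nlinarith [mul_pos hK (h.rho_pos t ht), sq_nonneg (c * ρ t),
      mul_nonneg (mul_nonneg hp (sq_nonneg c)) (sq_nonneg (ρ t))]
  exact fun t ht => sub_pos.1 (pos_of_hasDerivAt_neg_of_eq_zero
    (fun t ht => (h.hasDerivAt_u t ht).sub ((h.hasDerivAt_rho t ht).const_mul c)) hcross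
    (sub_pos.2 hb) t ht)

theorem false_of_le_mul_rho (h : RiccatiSystem s K p u ρ X b) (hs : 0 < s) (hK : 0 < K)
    (hX0 : Tendsto X atBot (𝓝 0)) (hρ0 : Tendsto ρ atBot (𝓝 0))
    (hle : ∀ t ≤ b, u t ≤ K / (2 * s) * ρ t) : False := by
  have hanti : AntitoneOn u (Iic b) := by
    refine antitoneOn_Iic_of_hasDerivAt_nonpos h.hasDerivAt_u fun t ht => ?_
    have hsu : s * u t ≤ K / 2 * ρ t := by
      calc s * u t ≤ s * (K / (2 * s) * ρ t) := by gcongr; exact hle t ht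
        _ = K / 2 * ρ t := by field_simp
    nlinarith [h.rho_pos t ht]
  have hunonpos : ∀ t ≤ b, u t ≤ 0 := by
    intro t ht
    by_contra! hut
    have hlim : Tendsto (fun τ => K / (2 * s) * ρ τ) atBot (𝓝 0) := by
      simpa using hρ0.const_mul (K / (2 * s))
    obtain ⟨τ, hτu, hτt⟩ := ((hlim.eventually_lt_const hut).and (eventually_le_atBot t)).exists
    linarith [hanti (hτt.trans ht) ht hτt, hle τ (hτt.trans ht)]
  have hXanti : AntitoneOn X (Iic b) :=
    antitoneOn_Iic_of_hasDerivAt_nonpos h.hasDerivAt_X fun t ht =>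
      mul_nonpos_of_nonpos_of_nonneg (hunonpos t ht) (h.X_pos t ht).le
  obtain ⟨t, htX, htb⟩ :=
    ((hX0.eventually_lt_const (h.X_pos b le_rfl)).and (eventually_le_atBot b)).exists
  linarith [hXanti htb self_mem_Iic htb]

theorem exists_bounds_of_mul_rho_le_le (h : RiccatiSystem s K p u ρ X b) {c₁ c₂ : ℝ}
    (hp : 0 < p) (hc₁ : 0 < c₁) (hu : ∀ t ≤ b, c₁ * ρ t ≤ u t ∧ u t ≤ c₂ * ρ t) :
    ∃ C₁ C₂, 0 < C₁ ∧ C₁ ≤ C₂ ∧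
      ∀ᶠ t in atBot, C₁ ≤ X t * (-t) ^ (1 / p) ∧ X t * (-t) ^ (1 / p) ≤ C₂ := by
  have hg : ∀ t ≤ b, HasDerivAt (fun t => (ρ t)⁻¹) (-(p * (u t / ρ t))) t := fun t ht =>
    ((h.hasDerivAt_rho t ht).inv (h.rho_pos t ht).ne').congr_deriv (by field_simp)
  obtain ⟨M₁, M₂, hM₁, hM₁₂, hev⟩ := exists_linear_bounds_atBot (A := p * c₁) (B := p * c₂)
    (by positivity) hg fun t ht => by
      have h₁ : c₁ ≤ u t / ρ t := by rw [le_div_iff₀ (h.rho_pos t ht)]; exact (hu t ht).1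
      have h₂ : u t / ρ t ≤ c₂ := by rw [div_le_iff₀ (h.rho_pos t ht)]; exact (hu t ht).2
      constructor <;> nlinarith
  have hM₂ : 0 < M₂ := hM₁.trans_le hM₁₂
  refine ⟨M₂⁻¹ ^ (1 / p), M₁⁻¹ ^ (1 / p), by positivity,
    rpow_le_rpow (by positivity) (inv_anti₀ hM₁ hM₁₂) (by positivity), ?_⟩
  filter_upwards [hev, eventually_le_atBot b, eventually_lt_atBot 0] with t ⟨hlo, hhi⟩ htb ht0
  have hρt := h.rho_pos t htb
  have hX : X t * (-t) ^ (1 / p) = (ρ t * -t) ^ (1 / p) := by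
    have := h.X_pos t htb
    rw [h.rho_eq t htb, mul_rpow (by positivity) (by linarith), ← rpow_mul this.le,
      mul_one_div_cancel hp.ne', rpow_one]
  have hlo' : ρ t * -t ≤ M₁⁻¹ :=
    calc ρ t * -t = M₁⁻¹ * (ρ t * (M₁ * -t)) := by field_simp
      _ ≤ M₁⁻¹ * (ρ t * (ρ t)⁻¹) := by gcongr
      _ = M₁⁻¹ := by field_simp
  have hhi' : M₂⁻¹ ≤ ρ t * -t :=
    calc M₂⁻¹ = M₂⁻¹ * (ρ t * (ρ t)⁻¹) := by field_simp
      _ ≤ M₂⁻¹ * (ρ t * (M₂ * -t)) := by gcongr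
      _ = ρ t * -t := by field_simp
  rw [hX]
  exact ⟨rpow_le_rpow (by positivity) hhi' (by positivity),
    rpow_le_rpow (by nlinarith) hlo' (by positivity)⟩

theorem false_of_lt_half (h : RiccatiSystem s K p u ρ X b) (hs : 0 < s)
    (hX0 : Tendsto X atBot (𝓝 0)) (hupos : ∀ t ≤ b, 0 < u t)
    (hKρ : ∀ t ≤ b, K * ρ t ≤ s / 2 * u t) (hb : u b < s / 2) : False := by
  set m := (u b + s / 2) / 2 with hm_def
  have hm : 0 < m := by linarith [hupos b le_rfl]
  have hms : m < s / 2 := by linarith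
  have hum : ∀ t ≤ b, 0 < m - u t := pos_of_hasDerivAt_neg_of_eq_zero
    (fun t ht => (h.hasDerivAt_u t ht).const_sub m)
    (fun t ht hzero => by
      have := hKρ t ht
      rw [show u t = m by linarith] at this ⊢
      nlinarith [mul_pos hm (sub_pos.2 hms)])
    (by linarith)
  have hdecay := le_mul_exp_of_mul_le_deriv (β := s / 2 - m) h.hasDerivAt_u fun t ht => by
    nlinarith [hKρ t ht, hupos t ht, hum t ht]
  obtain ⟨c, hc⟩ := exists_tendsto_atBot_of_abs_deriv_le (A := u b * exp (-((s / 2 - m) * b)))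
    (sub_pos.2 hms) h.hasDerivAt_log_X fun t ht => by
      rw [abs_of_pos (hupos t ht), mul_assoc, ← exp_add]
      convert hdecay t ht using 3
      ring
  have hlog : Tendsto (fun t => log (X t)) atBot atBot :=
    tendsto_log_nhdsGT_zero.comp (tendsto_nhdsWithin_iff.2 ⟨hX0, eventually_atBot.2 ⟨b, h.X_pos⟩⟩)
  exact not_tendsto_nhds_of_tendsto_atBot hlog c hc

theorem tendsto_zero_of_two_mul_lt (h : RiccatiSystem s K p u ρ X b) (hs : 0 < s) (hK : 0 < K)
    (hb : 2 * s < u b) : Tendsto (fun t => X t * exp (-(s * t))) atBot (𝓝 0) := by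
  have hu : ∀ t ≤ b, 0 < u t - 2 * s := pos_of_hasDerivAt_neg_of_eq_zero
    (fun t ht => (h.hasDerivAt_u t ht).sub_const (2 * s))
    (fun t ht hzero => by
      rw [show u t = 2 * s by linarith]
      nlinarith [mul_pos hK (h.rho_pos t ht)])
    (by linarith)
  have hX := le_mul_exp_of_mul_le_deriv (β := 2 * s) h.hasDerivAt_X fun t ht =>
    mul_le_mul_of_nonneg_right (by linarith [hu t ht]) (h.X_pos t ht).le
  have hlim : Tendsto (fun t => X b * exp (-(2 * s * b)) * exp (s * t)) atBot (𝓝 0) := by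
    simpa using (tendsto_exp_atBot.comp (tendsto_id.const_mul_atBot hs)).const_mul
      (X b * exp (-(2 * s * b)))
  refine tendsto_of_tendsto_of_tendsto_of_le_of_le' tendsto_const_nhds hlim ?_ ?_
  all_goals filter_upwards [eventually_le_atBot b] with t ht
  · exact (mul_pos (h.X_pos t ht) (exp_pos _)).le
  · calc X t * exp (-(s * t)) ≤ X b * exp (2 * s * (t - b)) * exp (-(s * t)) := by
          gcongr; exact hX t ht
      _ = X b * exp (-(2 * s * b)) * exp (s * t) := by
          simp only [mul_assoc, ← exp_add]; ring_nf

theorem exists_tendsto_of_half_le_of_le_two_mul (h : RiccatiSystem s K p u ρ X b) (hs : 0 < s)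
    (hK : 0 < K) (hp : 0 < p) (hlow : ∀ t ≤ b, s / 2 ≤ u t) (hupp : ∀ t ≤ b, u t ≤ 2 * s) :
    ∃ c, Tendsto (fun t => X t * exp (-(s * t))) atBot (𝓝 c) := by
  set γ := p * (s / 2) with hγ_def
  have hγ : 0 < γ := by positivity
  have hρ := le_mul_exp_of_mul_le_deriv (β := γ) h.hasDerivAt_rho fun t ht => by
    rw [hγ_def]
    nlinarith [mul_nonneg (mul_nonneg hp.le (h.rho_pos t ht).le) (sub_nonneg.2 (hlow t ht))]
  set A := 4 * K * ρ b * exp (-(γ * b)) / s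
  have hA : 0 < A := by have := h.rho_pos b le_rfl; positivity
  have hw := abs_le_mul_exp_of_hasDerivAt (w := fun t => u t - s) (e := fun t => -(K * ρ t))
    (σ := s / 2) (M := s) (by positivity) hγ.le hA
    (fun t ht => ((h.hasDerivAt_u t ht).sub_const s).congr_deriv (by ring)) hlow
    (fun t ht => by
      rw [abs_neg, abs_of_pos (mul_pos hK (h.rho_pos t ht))]
      calc K * ρ t ≤ K * (ρ b * exp (γ * (t - b))) := by gcongr; exact hρ t ht
        _ = s / 2 / 2 * A * exp (γ * t) := by
          simp only [A]; field_simp; rw [mul_sub, sub_eq_add_neg, exp_add]; ring)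
    (fun t ht => abs_le.2 ⟨by linarith [hlow t ht], by linarith [hupp t ht]⟩)
  obtain ⟨c, hc⟩ := exists_tendsto_atBot_of_abs_deriv_le hγ
    (fun t ht => ((h.hasDerivAt_log_X t ht).sub ((hasDerivAt_id' t).const_mul s)).congr_deriv
      (by ring)) hw
  refine ⟨exp c, ((continuous_exp.tendsto c).comp hc).congr' ?_⟩
  filter_upwards [eventually_le_atBot b] with t ht
  simp [exp_sub, exp_neg, exp_log (h.X_pos t ht), div_eq_mul_inv]

theorem exists_tendsto_of_mul_rho_le (h : RiccatiSystem s K p u ρ X b) (hs : 0 < s) (hK : 0 < K)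
    (hp : 0 < p) (hX0 : Tendsto X atBot (𝓝 0)) (hle : ∀ t ≤ b, 2 * K / s * ρ t ≤ u t) :
    ∃ c, Tendsto (fun t => X t * exp (-(s * t))) atBot (𝓝 c) := by
  have hKρ : ∀ t ≤ b, K * ρ t ≤ s / 2 * u t := fun t ht =>
    calc K * ρ t = s / 2 * (2 * K / s * ρ t) := by field_simp
      _ ≤ s / 2 * u t := by gcongr; exact hle t ht
  have hupos : ∀ t ≤ b, 0 < u t := fun t ht =>
    (mul_pos (by positivity) (h.rho_pos t ht)).trans_le (hle t ht)
  by_cases h₁ : ∃ t₁ ≤ b, u t₁ < s / 2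
  · obtain ⟨t₁, ht₁, hu₁⟩ := h₁
    exact ((h.mono ht₁).false_of_lt_half hs hX0 (fun t ht => hupos t (ht.trans ht₁))
      (fun t ht => hKρ t (ht.trans ht₁)) hu₁).elim
  by_cases h₂ : ∃ t₂ ≤ b, 2 * s < u t₂
  · obtain ⟨t₂, ht₂, hu₂⟩ := h₂
    exact ⟨0, (h.mono ht₂).tendsto_zero_of_two_mul_lt hs hK hu₂⟩
  push Not at h₁ h₂
  exact h.exists_tendsto_of_half_le_of_le_two_mul hs hK hp h₁ h₂

theorem exists_bounds (h : RiccatiSystem s K p u ρ X b) (hs : 0 < s) (hK : 0 < K) (hp : 0 < p)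
    (hX0 : Tendsto X atBot (𝓝 0)) (hρ0 : Tendsto ρ atBot (𝓝 0))
    (hsmall : ∀ t ≤ b, (2 * K / s) ^ 2 * (p + 1) * ρ t < K)
    (hnc : ¬ ∃ c, Tendsto (fun t => X t * exp (-(s * t))) atBot (𝓝 c)) :
    ∃ C₁ C₂, 0 < C₁ ∧ C₁ ≤ C₂ ∧
      ∀ᶠ t in atBot, C₁ ≤ X t * (-t) ^ (1 / p) ∧ X t * (-t) ^ (1 / p) ≤ C₂ := by
  by_cases hA : ∃ t₂ ≤ b, u t₂ < 2 * K / s * ρ t₂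
  · obtain ⟨t₂, ht₂, hu₂⟩ := hA
    have hup := (h.mono ht₂).lt_mul_rho_backward hs (fun t ht => hsmall t (ht.trans ht₂)) hu₂
    by_cases hA' : ∃ t₃ ≤ t₂, K / (2 * s) * ρ t₃ < u t₃
    · obtain ⟨t₃, ht₃, hu₃⟩ := hA'
      have hlo := (h.mono (ht₃.trans ht₂)).mul_rho_lt_backward hs hK hp.le hu₃
      exact (h.mono (ht₃.trans ht₂)).exists_bounds_of_mul_rho_le_le hp (by positivity)
        fun t ht => ⟨(hlo t ht).le, (hup t (ht.trans ht₃)).le⟩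
    · push Not at hA'
      exact ((h.mono ht₂).false_of_le_mul_rho hs hK hX0 hρ0 hA').elim
  · push Not at hA
    exact (hnc (h.exists_tendsto_of_mul_rho_le hs hK hp hX0 hA)).elim

end RiccatiSystem

theorem exists_bounds_of_fowler_system {s K q T₀ : ℝ} {X Z : ℝ → ℝ} (hs : 0 < s) (hK : 0 < K)
    (hq : 2 < q)
    (hX : ∀ t < T₀, HasDerivAt X (Z t) t)
    (hZ : ∀ t < T₀, HasDerivAt Z (s * Z t - K * X t * |X t| ^ (q - 2)) t)
    (hX0 : Tendsto X atBot (𝓝 0)) (hXpos : ∀ᶠ t in atBot, 0 < X t)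
    (hnc : ¬ ∃ c, Tendsto (fun t => X t * exp (-(s * t))) atBot (𝓝 c)) :
    ∃ C₁ C₂, 0 < C₁ ∧ C₁ ≤ C₂ ∧ ∀ᶠ t in atBot,
      C₁ ≤ X t * (-t) ^ (1 / (q - 2)) ∧ X t * (-t) ^ (1 / (q - 2)) ≤ C₂ := by
  have hp : 0 < q - 2 := by linarith
  have hρ0 : Tendsto (fun t => X t ^ (q - 2)) atBot (𝓝 0) := by
    have := (continuousAt_rpow_const 0 (q - 2) (Or.inr hp.le)).tendsto.comp hX0
    rwa [zero_rpow hp.ne'] at this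
  have hsmall : ∀ᶠ t in atBot, (2 * K / s) ^ 2 * (q - 2 + 1) * X t ^ (q - 2) < K :=
    (hρ0.const_mul _).eventually_lt_const (by simpa using hK)
  obtain ⟨b, hb⟩ := eventually_atBot.1 ((hXpos.and hsmall).and (eventually_lt_atBot T₀))
  refine RiccatiSystem.exists_bounds (u := fun t => Z t / X t) (b := b) ⟨fun t ht => ?_,
    fun t ht => ?_, fun t ht => ?_, fun t ht => (hb t ht).1.1, fun _ _ => rfl⟩
    hs hK hp hX0 hρ0 (fun t ht => (hb t ht).1.2) hnc
  · have hXt := (hb t ht).1.1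
    refine ((hZ t (hb t ht).2).div (hX t (hb t ht).2) hXt.ne').congr_deriv ?_
    rw [abs_of_pos hXt]
    field_simp
    ring
  · have hXt := (hb t ht).1.1
    refine ((hX t (hb t ht).2).rpow_const (p := q - 2) (Or.inl hXt.ne')).congr_deriv ?_
    rw [rpow_sub_one hXt.ne']
    field_simp
  · exact (hX t (hb t ht).2).congr_deriv (div_mul_cancel₀ _ (hb t ht).1.1.ne').symm

/-- Emden–Fowler variables: `t = log r`, `X = r ^ α v` and `Z = dX/dt`. -/
def fowlerX (α : ℝ) (v : ℝ → ℝ) (t : ℝ) : ℝ := v (exp t) * exp (α * t)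

def fowlerZ (α : ℝ) (v : ℝ → ℝ) (t : ℝ) : ℝ :=
  (deriv v (exp t) * exp t + α * v (exp t)) * exp (α * t)

section Fowler

variable {α : ℝ} {v : ℝ → ℝ}

theorem fowlerX_log {r : ℝ} (hr : 0 < r) : fowlerX α v (log r) = v r * r ^ α := by
  rw [fowlerX, exp_log hr, mul_comm α, exp_mul, exp_log hr]

theorem fowlerX_eq_rpow (t : ℝ) : fowlerX α v t = v (exp t) * exp t ^ α := by
  rw [← fowlerX_log (exp_pos t), log_exp]

theorem tendsto_fowlerX_atBot {c : ℝ} (h : Tendsto (fun r => v r * r ^ α) (𝓝[>] 0) (𝓝 c)) :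
    Tendsto (fowlerX α v) atBot (𝓝 c) :=
  (h.comp tendsto_exp_atBot_nhdsGT).congr fun t => (fowlerX_eq_rpow t).symm

theorem eventually_fowlerX_pos (h : ∀ᶠ r in 𝓝[>] 0, 0 < v r) :
    ∀ᶠ t in atBot, 0 < fowlerX α v t :=
  (tendsto_exp_atBot_nhdsGT.eventually h).mono fun _ ht => mul_pos ht (exp_pos _)

theorem tendsto_nhdsGT_of_tendsto_fowlerX_mul_exp {s c : ℝ}
    (h : Tendsto (fun t => fowlerX α v t * exp (-(s * t))) atBot (𝓝 c)) :
    Tendsto (fun r => v r * r ^ (α - s)) (𝓝[>] 0) (𝓝 c) := by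
  refine (h.comp tendsto_log_nhdsGT_zero).congr' ?_
  filter_upwards [self_mem_nhdsWithin] with r (hr : 0 < r)
  rw [Function.comp_apply, fowlerX_log hr, rpow_sub hr, mul_comm s, exp_neg, ← rpow_def_of_pos hr]
  ring

theorem hasDerivAt_fowlerX {t : ℝ} (hv : HasDerivAt v (deriv v (exp t)) (exp t)) :
    HasDerivAt (fowlerX α v) (fowlerZ α v t) t :=
  ((hv.comp t (hasDerivAt_exp t)).mul ((hasDerivAt_id' t).const_mul α).exp).congr_deriv
    (by simp only [fowlerZ, Function.comp_apply]; ring)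

theorem hasDerivAt_fowlerZ {m η K δ q s t : ℝ} (hs : s = 2 * α + 2 - m)
    (hη : η = -(α * (α + 2 - m))) (hαq : α * (q - 2) = 2 + δ)
    (hv : HasDerivAt v (deriv v (exp t)) (exp t))
    (hv' : HasDerivAt (deriv v) (deriv (deriv v) (exp t)) (exp t))
    (heq : deriv (deriv v) (exp t) + (m - 1) / exp t * deriv v (exp t) +
      η / exp t ^ 2 * v (exp t) + K * exp t ^ δ * v (exp t) * |v (exp t)| ^ (q - 2) = 0) :
    HasDerivAt (fowlerZ α v)
      (s * fowlerZ α v t - K * fowlerX α v t * |fowlerX α v t| ^ (q - 2)) t := by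
  have hE := hasDerivAt_exp t
  have hP := ((hasDerivAt_id' t).const_mul α).exp
  refine ((((hv'.comp t hE).mul hE).add ((hv.comp t hE).const_mul α)).mul hP).congr_deriv ?_
  have habs : |fowlerX α v t| ^ (q - 2) = |v (exp t)| ^ (q - 2) * (exp t ^ 2 * exp t ^ δ) := by
    rw [fowlerX, abs_mul, abs_of_pos (exp_pos _), mul_rpow (abs_nonneg _) (exp_pos _).le,
      ← exp_mul, show α * t * (q - 2) = t * 2 + t * δ by linear_combination t * hαq, exp_add,
      exp_mul, exp_mul, rpow_two]
  have heq' : deriv (deriv v) (exp t) * exp t ^ 2 = -((m - 1) * exp t * deriv v (exp t)) -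
      η * v (exp t) - K * exp t ^ 2 * exp t ^ δ * v (exp t) * |v (exp t)| ^ (q - 2) := by
    field_simp at heq
    linear_combination heq
  rw [habs, fowlerZ, fowlerX]
  subst hs hη
  simp only [Function.comp_apply, Pi.add_apply, Pi.mul_apply]
  linear_combination exp (α * t) * heq'

end Fowler

theorem hasDerivAt_deriv_of_contDiffOn_two {f : ℝ → ℝ} {U : Set ℝ} (hU : IsOpen U)
    (hf : ContDiffOn ℝ 2 f U) {x : ℝ} (hx : x ∈ U) :
    HasDerivAt f (deriv f x) x ∧ HasDerivAt (deriv f) (deriv (deriv f) x) x :=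
  ⟨((hf.differentiableOn (by norm_num)).differentiableAt (hU.mem_nhds hx)).hasDerivAt,
    (((hf.deriv_of_isOpen (m := 1) hU (by norm_num)).differentiableOn (by norm_num))
      |>.differentiableAt (hU.mem_nhds hx)).hasDerivAt⟩

theorem exists_Ioo_forall_of_eventually_nhdsGT {P : ℝ → Prop} (h : ∀ᶠ r in 𝓝[>] 0, P r) {c : ℝ}
    (hc : 0 < c) : ∃ r₁ ∈ Ioo 0 c, ∀ r ∈ Ioo 0 r₁, P r := by
  obtain ⟨ε, hε, hsub⟩ := mem_nhdsGT_iff_exists_Ioo_subset.1 h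
  have hε' : 0 < ε := hε
  refine ⟨min ε c / 2, ⟨by positivity, by linarith [min_le_right ε c]⟩, fun r hr => hsub ?_⟩
  exact ⟨hr.1, hr.2.trans_le (by linarith [min_le_left ε c])⟩

theorem alpha_mul_sub_two_eq {q δ l α : ℝ} (hq : 2 < q) (hδ : -2 < δ)
    (hl : l = 2 * (q + δ) / (2 + δ)) (hα : α = 2 / (l - 2)) : α * (q - 2) = 2 + δ := by
  have h2δ : 2 + δ ≠ 0 := by linarith
  have hq2 : q - 2 ≠ 0 := by linarith
  rw [hα, show l - 2 = 2 * (q - 2) / (2 + δ) by rw [hl]; field_simp; ring]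
  field_simp

theorem alpha_eq_of_serrinStar {n : ℕ} {η l α : ℝ} (hl2 : 2 < l) (hlcrit : l = serrinStar n η)
    (hα : α = 2 / (l - 2)) : α = ((n : ℝ) - 2 + √(((n : ℝ) - 2) ^ 2 - 4 * η)) / 2 := by
  rw [serrinStar] at hlcrit
  set d := (n : ℝ) - 2 + √(((n : ℝ) - 2) ^ 2 - 4 * η)
  have hd : d ≠ 0 := by
    rintro hd; rw [hd, div_zero] at hlcrit; linarith
  have : l - 2 = 4 / d := by rw [hlcrit]; field_simp; ring
  rw [hα, this]
  field_simp
  norm_num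

theorem stmt18_general (n : ℕ) (η K q δ l α : ℝ)
    (hη : η < ((n:ℝ) - 2) ^ 2 / 4) (hK : 0 < K)
    (hq : 2 < q) (hδ : -2 < δ)
    (hl : l = 2 * (q + δ) / (2 + δ)) (hlcrit : l = serrinStar n η)
    (hα : α = 2 / (l - 2))
    (r₀ : ℝ) (hr₀ : 0 < r₀) (v : ℝ → ℝ)
    (hv : ContDiffOn ℝ 2 v (Ioo 0 r₀))
    (heq : ∀ r ∈ Ioo (0:ℝ) r₀,
      deriv (deriv v) r + ((n:ℝ) - 1) / r * deriv v r + η / r ^ 2 * v r +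
        K * r ^ δ * v r * |v r| ^ (q - 2) = 0)
    (hpos : ∀ᶠ r in 𝓝[>] (0:ℝ), 0 < v r)
    (hlim : Tendsto (fun r => v r * r ^ α) (𝓝[>] (0:ℝ)) (𝓝 0))
    (hnotMu : ¬ ∃ c : ℝ, Tendsto (fun r => v r * r ^ kappa n η) (𝓝[>] (0:ℝ)) (𝓝 c)) :
    ∃ C₁ C₂ : ℝ, 0 < C₁ ∧ C₁ ≤ C₂ ∧
      ∃ r₁ ∈ Ioo (0:ℝ) (min r₀ 1),
        ∀ r ∈ Ioo (0:ℝ) r₁,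
          C₁ ≤ v r * r ^ ((n:ℝ) - 2 - kappa n η) * |Real.log r| ^ (1 / (q - 2)) ∧
          v r * r ^ ((n:ℝ) - 2 - kappa n η) * |Real.log r| ^ (1 / (q - 2)) ≤ C₂ := by
  set s := √(((n : ℝ) - 2) ^ 2 - 4 * η)
  have hs : 0 < s := sqrt_pos.2 (by linarith)
  have hl2 : 2 < l := by rw [hl, lt_div_iff₀ (by linarith)]; linarith
  have hαs : α = (n - 2 + s) / 2 := alpha_eq_of_serrinStar hl2 hlcrit hα
  have hκ : kappa n η = α - s := by rw [kappa, hαs]; ring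
  have hηα : η = -(α * (α + 2 - n)) := by
    rw [hαs]
    linear_combination (1 / 4 : ℝ) * sq_sqrt (show 0 ≤ ((n : ℝ) - 2) ^ 2 - 4 * η by linarith)
  have hexp : ∀ t < log r₀, exp t ∈ Ioo 0 r₀ := fun t ht =>
    ⟨exp_pos t, (lt_log_iff_exp_lt hr₀).1 ht⟩
  have hv' := fun t ht => hasDerivAt_deriv_of_contDiffOn_two isOpen_Ioo hv (hexp t ht)
  obtain ⟨C₁, C₂, hC₁, hC₁₂, hev⟩ := exists_bounds_of_fowler_system (T₀ := log r₀) hs hK hq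
    (fun t ht => hasDerivAt_fowlerX (hv' t ht).1)
    (fun t ht => hasDerivAt_fowlerZ (by rw [hαs]; ring) hηα (alpha_mul_sub_two_eq hq hδ hl hα)
      (hv' t ht).1 (hv' t ht).2 (heq _ (hexp t ht)))
    (tendsto_fowlerX_atBot hlim) (eventually_fowlerX_pos hpos)
    (fun ⟨c, hc⟩ => hnotMu ⟨c, hκ ▸ tendsto_nhdsGT_of_tendsto_fowlerX_mul_exp hc⟩)
  refine ⟨C₁, C₂, hC₁, hC₁₂, exists_Ioo_forall_of_eventually_nhdsGT ?_ (lt_min hr₀ one_pos)⟩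
  filter_upwards [tendsto_log_nhdsGT_zero.eventually hev, Ioo_mem_nhdsGT one_pos] with r hr hr1
  rwa [fowlerX_log hr1.1, ← abs_of_neg (log_neg hr1.1 hr1.2),
    ← show (n : ℝ) - 2 - kappa n η = α by rw [hκ, hαs]; ring] at hr

theorem stmt18 (n : ℕ) (hn : 2 < n) (η K q δ l α : ℝ)
    (hη : η < ((n:ℝ) - 2) ^ 2 / 4) (hK : 0 < K)
    (hq : 2 < q) (hδ : -2 < δ)
    (hl : l = 2 * (q + δ) / (2 + δ)) (hlcrit : l = serrinStar n η)
    (hα : α = 2 / (l - 2))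
    (r₀ : ℝ) (hr₀ : 0 < r₀) (v : ℝ → ℝ)
    (hv : ContDiffOn ℝ 2 v (Ioo 0 r₀))
    (heq : ∀ r ∈ Ioo (0:ℝ) r₀,
      deriv (deriv v) r + ((n:ℝ) - 1) / r * deriv v r + η / r ^ 2 * v r +
        K * r ^ δ * v r * |v r| ^ (q - 2) = 0)
    (hpos : ∀ᶠ r in 𝓝[>] (0:ℝ), 0 < v r)
    (hlim : Tendsto (fun r => v r * r ^ α) (𝓝[>] (0:ℝ)) (𝓝 0))
    (hlim' : Tendsto (fun r => deriv v r * r ^ (α + 1)) (𝓝[>] (0:ℝ)) (𝓝 0))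
    (hnotMu : ¬ ∃ c : ℝ, Tendsto (fun r => v r * r ^ kappa n η) (𝓝[>] (0:ℝ)) (𝓝 c)) :
    ∃ C₁ C₂ : ℝ, 0 < C₁ ∧ C₁ ≤ C₂ ∧
      ∃ r₁ ∈ Ioo (0:ℝ) (min r₀ 1),
        ∀ r ∈ Ioo (0:ℝ) r₁,
          C₁ ≤ v r * r ^ ((n:ℝ) - 2 - kappa n η) * |Real.log r| ^ (1 / (q - 2)) ∧
          v r * r ^ ((n:ℝ) - 2 - kappa n η) * |Real.log r| ^ (1 / (q - 2)) ≤ C₂ :=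
  stmt18_general n η K q δ l α hη hK hq hδ hl hlcrit hα r₀ hr₀ v hv heq hpos hlim hnotMu
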